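/- Fix b ≥ 0 and define Z_HA(b) = {(z, w, r, t) ∈ {0,1} × ℝ³ : t ≥ w², w(1−z) = 0, |r|(1−z) ≤ b(1−z), |r|z ≥ bz, w = rz}. Define Z̄(b) = {(z, w, r, t, w⁻, w⁺, z⁻, z⁺) ∈ ℝ⁸ : t ≥ (w⁺)²/z⁺ + (w⁻)²/z⁻, w⁻ ≥ bz⁻, w⁺ ≥ bz⁺, |r − w| ≤ b(1 − z⁻ − z⁺), z⁻ + z⁺ = z ≤ 1, w = w⁺ − w⁻, z⁻ ≥ 0, z⁺ ≥ 0}, where the perspective terms use the conventions 0/0 = 0 and a/0 = +∞ for a > 0. Then the closed convex hull of Z_HA(b) equals the projection of Z̄(b) onto the coordinates (z, w, r, t). -/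

import Mathlib

/-- The mixed-integer set Z_HA(b) ⊆ ℝ⁴ in coordinates (z, w, r, t). -/
def ZHA (b : ℝ) : Set (ℝ × ℝ × ℝ × ℝ) :=
  {q | let (z, w, r, t) := q
       (z = 0 ∨ z = 1) ∧ w^2 ≤ t ∧ w * (1 - z) = 0 ∧
       |r| * (1 - z) ≤ b * (1 - z) ∧ b * z ≤ |r| * z ∧ w = r * z}

/-- The extended set Z̄(b) ⊆ ℝ⁸ in coordinates (z, w, r, t, w⁻, w⁺, z⁻, z⁺).
The perspective terms (w⁺)²/z⁺ and (w⁻)²/z⁻ use the conventions 0²/0 = 0 and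
a²/0 = +∞ for a ≠ 0: since real division by zero is 0 in Lean, the +∞
convention is encoded by the implications z⁺ = 0 → w⁺ = 0 and z⁻ = 0 → w⁻ = 0
(points violating them have value +∞ and hence cannot satisfy the epigraph
inequality). -/
def Zbar (b : ℝ) : Set (ℝ × ℝ × ℝ × ℝ × ℝ × ℝ × ℝ × ℝ) :=
  {q | let (z, w, r, t, wm, wp, zm, zp) := q
       ((zp = 0 → wp = 0) ∧ (zm = 0 → wm = 0) ∧ wp^2 / zp + wm^2 / zm ≤ t) ∧
       b * zm ≤ wm ∧ b * zp ≤ wp ∧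
       |r - w| ≤ b * (1 - zm - zp) ∧
       zm + zp = z ∧ z ≤ 1 ∧ w = wp - wm ∧ 0 ≤ zm ∧ 0 ≤ zp}

/-!
Both sides are identified with the explicit set `hullZHA b`: `0 ≤ z ≤ 1`, `|r - w| ≤ b (1 - z)`,
`w² ≤ t z` and `b² z ≤ t`. It contains Z_HA(b) and is closed and convex (`w² ≤ t z` is a rotated
second-order cone), so it contains the closed convex hull. Each of its points lifts to Z̄(b): put
all of `(z, w)` on one side when `|w| ≥ b z`, and otherwise split it so that `w⁺ = b z⁺` and
`w⁻ = b z⁻`. Finally, a point of Z̄(b) is, up to raising `t` (a recession direction of Z_HA(b)),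
the convex combination with weights `z⁺, z⁻, 1 - z` of the points `(1, α, α, α²)`,
`(1, -β, -β, β²)` and `(0, 0, ρ, 0)` of Z_HA(b), where `α = w⁺/z⁺`, `β = w⁻/z⁻` and
`ρ = (r - w)/(1 - z)`.
-/

lemma Convex.smul_add_smul_add_smul_mem {𝕜 E : Type*} [Field 𝕜] [LinearOrder 𝕜]
    [IsStrictOrderedRing 𝕜] [AddCommGroup E] [Module 𝕜 E] {s : Set E} (hs : Convex 𝕜 s)
    {x y z : E} (hx : x ∈ s) (hy : y ∈ s) (hz : z ∈ s) {a b c : 𝕜} (ha : 0 ≤ a) (hb : 0 ≤ b)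
    (hc : 0 ≤ c) (habc : a + b + c = 1) : a • x + b • y + c • z ∈ s := by
  have hw : ∀ i ∈ Finset.univ, 0 ≤ ![a, b, c] i := by
    intro i _; fin_cases i <;> assumption
  have hp : ∀ i ∈ Finset.univ, ![x, y, z] i ∈ s := by
    intro i _; fin_cases i <;> assumption
  simpa [Fin.sum_univ_three, ← add_assoc] using
    hs.sum_mem hw (by simpa [Fin.sum_univ_three] using habc) hp

open Pointwise in
lemma add_smul_mem_convexHull {𝕜 E : Type*} [Ring 𝕜] [PartialOrder 𝕜] [AddCommGroup E]
    [Module 𝕜 E] {s : Set E} {v : E} (hs : ∀ x ∈ s, ∀ c : 𝕜, 0 ≤ c → x + c • v ∈ s)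
    {x : E} (hx : x ∈ convexHull 𝕜 s) {c : 𝕜} (hc : 0 ≤ c) : x + c • v ∈ convexHull 𝕜 s := by
  have hsub : c • v +ᵥ s ⊆ s := by
    rintro _ ⟨y, hy, rfl⟩
    simpa [add_comm] using hs y hy c hc
  have hmem : c • v +ᵥ x ∈ convexHull 𝕜 (c • v +ᵥ s) := by
    rw [convexHull_vadd]
    exact Set.vadd_mem_vadd_set hx
  simpa [add_comm] using convexHull_mono hsub hmem

lemma sq_add_le_mul_add_of_sq_le_mul {w₁ w₂ t₁ t₂ z₁ z₂ : ℝ} (ht₁ : 0 ≤ t₁) (ht₂ : 0 ≤ t₂)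
    (hz₁ : 0 ≤ z₁) (hz₂ : 0 ≤ z₂) (h₁ : w₁ ^ 2 ≤ t₁ * z₁) (h₂ : w₂ ^ 2 ≤ t₂ * z₂) :
    (w₁ + w₂) ^ 2 ≤ (t₁ + t₂) * (z₁ + z₂) := by
  -- `(w₁ w₂)² ≤ (t₁ z₂) (t₂ z₁)`, then AM-GM
  have hprod : (w₁ * w₂) ^ 2 ≤ ((t₁ * z₂ + t₂ * z₁) / 2) ^ 2 := by
    nlinarith [sq_nonneg (t₁ * z₂ - t₂ * z₁), mul_le_mul h₁ h₂ (sq_nonneg _) (by positivity)]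
  have hcross : w₁ * w₂ ≤ (t₁ * z₂ + t₂ * z₁) / 2 :=
    (abs_le_of_sq_le_sq' hprod (by positivity)).2
  nlinarith

lemma exists_le_mul_eq_of_mul_le {b x a : ℝ} (hx : 0 ≤ x) (h0 : x = 0 → a = 0)
    (hba : b * x ≤ a) : ∃ α, b ≤ α ∧ x * α = a ∧ x * α ^ 2 = a ^ 2 / x := by
  rcases hx.eq_or_lt with rfl | hx
  · exact ⟨b, le_rfl, by simp [h0 rfl]⟩
  · exact ⟨a / x, (le_div_iff₀ hx).2 (by linarith), by field_simp, by field_simp⟩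

lemma exists_abs_le_mul_eq {b y a : ℝ} (hb : 0 ≤ b) (hy : 0 ≤ y) (ha : |a| ≤ b * y) :
    ∃ ρ, |ρ| ≤ b ∧ y * ρ = a := by
  rcases hy.eq_or_lt with rfl | hy
  · have ha : a = 0 := by simpa using ha
    exact ⟨0, by simpa using hb, by simp [ha]⟩
  · refine ⟨a / y, ?_, by field_simp⟩
    rwa [abs_div, abs_of_pos hy, div_le_iff₀ hy]

/-- `max (w², b² z²) / z` is the minimum of `(w⁺)²/z⁺ + (w⁻)²/z⁻` over the splittings of `(z, w)`
allowed in `Zbar b`. -/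
def hullZHA (b : ℝ) : Set (ℝ × ℝ × ℝ × ℝ) :=
  {q | 0 ≤ q.1 ∧ q.1 ≤ 1 ∧ |q.2.2.1 - q.2.1| ≤ b * (1 - q.1) ∧ q.2.1 ^ 2 ≤ q.2.2.2 * q.1 ∧
    b ^ 2 * q.1 ≤ q.2.2.2}

lemma isClosed_hullZHA (b : ℝ) : IsClosed (hullZHA b) := by
  simp only [hullZHA, Set.ofPred_and]
  repeat' apply IsClosed.inter
  all_goals exact isClosed_le (by fun_prop) (by fun_prop)

lemma convex_hullZHA (b : ℝ) : Convex ℝ (hullZHA b) := by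
  rintro ⟨z₁, w₁, r₁, t₁⟩ ⟨hz₁, hz₁', hr₁, hw₁, ht₁⟩ ⟨z₂, w₂, r₂, t₂⟩ ⟨hz₂, hz₂', hr₂, hw₂, ht₂⟩
    μ ν hμ hν hμν
  simp only [hullZHA, Set.mem_ofPred_eq, Prod.smul_mk, Prod.mk_add_mk, smul_eq_mul] at *
  have hbμν : b * μ + b * ν = b := by rw [← mul_add, hμν, mul_one]
  obtain ⟨hr₁, hr₁'⟩ := abs_le.1 hr₁
  obtain ⟨hr₂, hr₂'⟩ := abs_le.1 hr₂
  have ht₁0 : 0 ≤ t₁ := (by positivity : 0 ≤ b ^ 2 * z₁).trans ht₁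
  have ht₂0 : 0 ≤ t₂ := (by positivity : 0 ≤ b ^ 2 * z₂).trans ht₂
  refine ⟨by positivity, by nlinarith, abs_le.2 ⟨?_, ?_⟩, ?_, by nlinarith⟩
  · linarith [mul_le_mul_of_nonneg_left hr₁ hμ, mul_le_mul_of_nonneg_left hr₂ hν]
  · linarith [mul_le_mul_of_nonneg_left hr₁' hμ, mul_le_mul_of_nonneg_left hr₂' hν]
  refine sq_add_le_mul_add_of_sq_le_mul (by positivity) (by positivity) (by positivity)
    (by positivity) ?_ ?_
  · nlinarith [mul_le_mul_of_nonneg_left hw₁ (sq_nonneg μ)]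
  · nlinarith [mul_le_mul_of_nonneg_left hw₂ (sq_nonneg ν)]

section

variable {b : ℝ}

lemma ZHA_subset_hullZHA (hb : 0 ≤ b) : ZHA b ⊆ hullZHA b := by
  rintro ⟨z, w, r, t⟩ ⟨rfl | rfl, hwt, -, hr, hbr, rfl⟩
  · have ht : 0 ≤ t := by simpa using hwt
    exact ⟨le_rfl, zero_le_one, by simpa using hr, by simp, by simpa using ht⟩
  · have hbr : b ≤ |r| := by simpa using hbr
    have hbr : b ^ 2 ≤ r ^ 2 := by simpa only [sq_abs] using pow_le_pow_left₀ hb hbr 2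
    exact ⟨zero_le_one, le_rfl, by simp, by simpa using hwt,
      by simpa using hbr.trans (by simpa using hwt)⟩

lemma hullZHA_subset_image_Zbar (hb : 0 ≤ b) :
    hullZHA b ⊆ (fun q : ℝ × ℝ × ℝ × ℝ × ℝ × ℝ × ℝ × ℝ =>
      (q.1, q.2.1, q.2.2.1, q.2.2.2.1)) '' Zbar b := by
  rintro ⟨z, w, r, t⟩ ⟨hz, hz1, hr, hwt, hbt⟩
  have ht : 0 ≤ t := (by positivity : 0 ≤ b ^ 2 * z).trans hbt
  rcases le_or_gt (b * z) w with hw | hw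
  · exact ⟨(z, w, r, t, 0, w, 0, z), ⟨⟨fun h0 => by simpa [h0] using hwt, fun _ => rfl,
      by simpa using div_le_of_le_mul₀ hz ht hwt⟩, by simp, hw,
      by simpa using hr, by simp, hz1, by simp, le_rfl, hz⟩, rfl⟩
  rcases le_or_gt (b * z) (-w) with hw' | hw'
  · exact ⟨(z, w, r, t, -w, 0, z, 0), ⟨⟨fun _ => rfl, fun h0 => by simpa [h0] using hwt,
      by simpa using div_le_of_le_mul₀ hz ht hwt⟩, hw', by simp,
      by simpa using hr, by simp, hz1, by simp, hz, le_rfl⟩, rfl⟩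
  -- `|w| < b z`: split so that both parts sit on the boundary `w± = b z±`.
  have hb0 : 0 < b := by
    by_contra! hb0
    nlinarith
  set wp := (b * z + w) / 2 with hwp
  set wm := (b * z - w) / 2 with hwm
  have hwp0 : 0 < wp := by linarith
  have hwm0 : 0 < wm := by linarith
  have hsplit : wm / b + wp / b = z := by field_simp; linarith
  have hpersp : wp ^ 2 / (wp / b) + wm ^ 2 / (wm / b) = b ^ 2 * z := by
    field_simp
    linarith
  refine ⟨(z, w, r, t, wm, wp, wm / b, wp / b), ⟨⟨fun h => absurd h (by positivity),
    fun h => absurd h (by positivity), by simpa only [hpersp]⟩, (mul_div_cancel₀ wm hb0.ne').le,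
    (mul_div_cancel₀ wp hb0.ne').le, ?_,
    hsplit, hz1, by linarith, by positivity, by positivity⟩, rfl⟩
  simpa only [sub_sub, hsplit] using hr

lemma mk_one_mem_ZHA {a t : ℝ} (ha : b ≤ |a|) (ht : a ^ 2 ≤ t) : ((1 : ℝ), a, a, t) ∈ ZHA b :=
  ⟨Or.inr rfl, ht, by ring, by simp, by simpa using ha, by ring⟩

lemma mk_zero_mem_ZHA {r t : ℝ} (hr : |r| ≤ b) (ht : 0 ≤ t) : ((0 : ℝ), (0 : ℝ), r, t) ∈ ZHA b :=
  ⟨Or.inl rfl, by simpa using ht, by ring, by simpa using hr, by simp, by ring⟩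

lemma add_smul_mem_ZHA {q : ℝ × ℝ × ℝ × ℝ} (hq : q ∈ ZHA b) {c : ℝ} (hc : 0 ≤ c) :
    q + c • ((0 : ℝ), (0 : ℝ), (0 : ℝ), (1 : ℝ)) ∈ ZHA b := by
  obtain ⟨z, w, r, t⟩ := q
  obtain ⟨hz, hwt, h⟩ := hq
  exact ⟨by simpa using hz, by simpa using hwt.trans (le_add_of_nonneg_right hc), by simpa using h⟩

lemma image_Zbar_subset_convexHull (hb : 0 ≤ b) :
    (fun q : ℝ × ℝ × ℝ × ℝ × ℝ × ℝ × ℝ × ℝ =>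
      (q.1, q.2.1, q.2.2.1, q.2.2.2.1)) '' Zbar b ⊆ convexHull ℝ (ZHA b) := by
  rintro _ ⟨⟨z, w, r, t, wm, wp, zm, zp⟩, ⟨⟨hwp, hwm, ht⟩, hbm, hbp, hr, rfl, hz1, rfl, hzm, hzp⟩,
    rfl⟩
  obtain ⟨α, hbα, hα, hα2⟩ := exists_le_mul_eq_of_mul_le hzp hwp hbp
  obtain ⟨β, hbβ, hβ, hβ2⟩ := exists_le_mul_eq_of_mul_le hzm hwm hbm
  obtain ⟨ρ, hρ, hρr⟩ := exists_abs_le_mul_eq hb (sub_nonneg.2 hz1) (by rwa [sub_sub] at hr)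
  have hcomb : zp • ((1 : ℝ), α, α, α ^ 2) + zm • ((1 : ℝ), -β, -β, β ^ 2) +
      (1 - (zm + zp)) • ((0 : ℝ), (0 : ℝ), ρ, (0 : ℝ)) ∈ convexHull ℝ (ZHA b) :=
    (convex_convexHull ℝ _).smul_add_smul_add_smul_mem
      (subset_convexHull ℝ _ (mk_one_mem_ZHA (hbα.trans (le_abs_self α)) le_rfl))
      (subset_convexHull ℝ _ (mk_one_mem_ZHA (by simpa using hbβ.trans (le_abs_self β)) (by simp)))
      (subset_convexHull ℝ _ (mk_zero_mem_ZHA hρ le_rfl)) hzp hzm (sub_nonneg.2 hz1) (by ring)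
  convert add_smul_mem_convexHull (fun q hq c hc => add_smul_mem_ZHA hq hc) hcomb
    (sub_nonneg.2 ht) using 1
  simp only [Prod.smul_mk, Prod.mk_add_mk, smul_eq_mul, Prod.mk.injEq]
  refine ⟨by ring, by linear_combination -hα + hβ, by linear_combination -hα + hβ - hρr,
    by linear_combination -hα2 - hβ2⟩

end

theorem stmt_4 (b : ℝ) (hb : 0 ≤ b) :
    closure (convexHull ℝ (ZHA b)) =
      (fun q : ℝ × ℝ × ℝ × ℝ × ℝ × ℝ × ℝ × ℝ =>
        (q.1, q.2.1, q.2.2.1, q.2.2.2.1)) '' Zbar b := by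
  have hclosure : closure (convexHull ℝ (ZHA b)) ⊆ hullZHA b :=
    closure_minimal (convexHull_min (ZHA_subset_hullZHA hb) (convex_hullZHA b))
      (isClosed_hullZHA b)
  exact (hclosure.trans (hullZHA_subset_image_Zbar hb)).antisymm
    ((image_Zbar_subset_convexHull hb).trans subset_closure)
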